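/- Let (λ_n)_{n∈ℕ} be a sequence of pairwise distinct points of the open unit disc of ℂ satisfying the Carleson interpolating condition. Let H be a complex Hilbert space, (x_n)_{n∈ℕ} a sequence of nonzero vectors whose closed linear span is H, and T ∈ B(H) an operator with T x_n = λ_n x_n for every n. Let D ∈ B(ℓ²(ℕ, ℂ)) be the diagonal operator given by (D a)(n) = λ_n·a(n). If T is polynomially bounded, then there exists a continuous linear equivalence X : H → ℓ²(ℕ, ℂ) such that X ∘ T = D ∘ X; that is, T is similar to D. -/

import Mathlib

noncomputable section

/-- An operator `T` is polynomially bounded if `‖p(T)‖ ≤ M · sup_{|z| ≤ 1} |p(z)|`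
for some `M > 0` and all polynomials `p`. -/
def PolynomiallyBounded {H : Type*} [NormedAddCommGroup H] [NormedSpace ℂ H] (T : H →L[ℂ] H) : Prop :=
  ∃ M : ℝ, 0 < M ∧ ∀ p : Polynomial ℂ,
    ‖Polynomial.aeval T p‖ ≤ M * sSup ((fun z : ℂ => ‖p.eval z‖) '' {z : ℂ | ‖z‖ ≤ 1})

/-- A sequence of points of the open unit disc satisfies the Carleson interpolating
condition if the Blaschke-type products over finite sets avoiding an index are uniformly
bounded below. -/
def CarlesonCondition (lam : ℕ → ℂ) : Prop :=
  ∃ δ : ℝ, 0 < δ ∧ ∀ (n : ℕ) (F : Finset ℕ), n ∉ F →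
    δ ≤ ∏ k ∈ F, ‖lam k - lam n‖ / ‖1 - (starRingEnd ℂ) (lam k) * lam n‖

/-!
Let `δ` be the Carleson constant and `M` the polynomial bound, and normalise the eigenvectors to
unit vectors `y n`. Given a finite set `F` and signs `ε k = ±1`, an explicit interpolating
function of P. Jones type is holomorphic on a disc of radius `> 1`, takes the value `ε k` at
`λ k` for `k ∈ F`, and is bounded by `2e²δ⁻³` on the closed unit disc. Its Taylor polynomials
converge uniformly there, so polynomial boundedness turns it into an operator of norm at most
`M·2e²δ⁻³` that multiplies each `y k` by `ε k`. Averaging over all sign patterns with the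
parallelogram law gives `‖∑ c k • y k‖² ≍ ∑ ‖c k‖²` on finite sums. Hence `a ↦ ∑ a k • y k` is an
isomorphism of `ℓ²` onto the closed span of the `y n`, which is `H`, and it conjugates the
diagonal operator to `T`.
-/

open ComplexConjugate Finset Metric Filter Topology

section DiscGeometry

open Complex

def blaschkeFactor (a z : ℂ) : ℂ := (z - a) / (1 - conj a * z)

/-- `k_a z / k_a a` for the Szegő kernel `k_a z = (1 - conj a * z)⁻¹`. -/
def szegoRatio (a z : ℂ) : ℂ := (1 - conj a * a) / (1 - conj a * z)

lemma one_sub_conj_mul_ne_zero {a z : ℂ} (h : ‖a‖ * ‖z‖ < 1) : 1 - conj a * z ≠ 0 := by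
  refine sub_ne_zero.2 fun h' => ?_
  rw [← norm_conj a, ← norm_mul, ← h', norm_one] at h
  exact h.false

lemma one_sub_conj_mul_ne_zero_of_norm_lt_one {a z : ℂ} (ha : ‖a‖ < 1) (hz : ‖z‖ ≤ 1) :
    1 - conj a * z ≠ 0 :=
  one_sub_conj_mul_ne_zero (mul_lt_one_of_nonneg_of_lt_one_left (norm_nonneg a) ha hz)

lemma one_sub_conj_mul_self (a : ℂ) : 1 - conj a * a = ((1 - ‖a‖ ^ 2 : ℝ) : ℂ) := by
  rw [conj_mul']; push_cast; ring

lemma norm_blaschkeFactor (a z : ℂ) : ‖blaschkeFactor a z‖ = ‖a - z‖ / ‖1 - conj a * z‖ := by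
  rw [blaschkeFactor, norm_div, norm_sub_rev]

lemma norm_blaschkeFactor_of_norm_eq_one {a z : ℂ} (ha : ‖a‖ < 1) (hz : ‖z‖ = 1) :
    ‖blaschkeFactor a z‖ = 1 := by
  have hza : z - a ≠ 0 := sub_ne_zero.2 fun h => by rw [h] at hz; exact ha.ne hz
  have h : 1 - conj a * z = conj (z - a) * z := by
    rw [map_sub, sub_mul, conj_mul', hz]; simp [mul_comm]
  rw [blaschkeFactor, h, norm_div, norm_mul, norm_conj, hz, mul_one,
    div_self (norm_ne_zero_iff.2 hza)]

lemma one_sub_norm_blaschkeFactor_sq {a b : ℂ} (ha : ‖a‖ < 1) (hb : ‖b‖ < 1) :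
    1 - ‖blaschkeFactor a b‖ ^ 2 = (1 - ‖a‖ ^ 2) * (1 - ‖b‖ ^ 2) / ‖1 - conj a * b‖ ^ 2 := by
  have h : normSq (1 - conj a * b) ≠ 0 := by
    simpa using one_sub_conj_mul_ne_zero_of_norm_lt_one ha hb.le
  rw [blaschkeFactor, norm_div, div_pow, eq_div_iff (by simpa [← normSq_eq_norm_sq] using h)]
  simp only [← normSq_eq_norm_sq]
  rw [sub_mul, div_mul_cancel₀ _ h]
  simp only [normSq_apply, sub_re, sub_im, mul_re, mul_im, conj_re, conj_im, one_re, one_im]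
  ring

lemma norm_szegoRatio {a : ℂ} (ha : ‖a‖ < 1) (z : ℂ) :
    ‖szegoRatio a z‖ = (1 - ‖a‖ ^ 2) / ‖1 - conj a * z‖ := by
  rw [szegoRatio, norm_div, one_sub_conj_mul_self, norm_real,
    Real.norm_of_nonneg (by nlinarith [norm_nonneg a])]

lemma norm_szegoRatio_le_two {a z : ℂ} (ha : ‖a‖ < 1) (hz : ‖z‖ ≤ 1) :
    ‖szegoRatio a z‖ ≤ 2 := by
  have hden : 1 - ‖a‖ ≤ ‖1 - conj a * z‖ := by
    calc 1 - ‖a‖ ≤ 1 - ‖conj a * z‖ := by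
          rw [norm_mul, norm_conj]; nlinarith [norm_nonneg a, norm_nonneg z]
      _ ≤ ‖1 - conj a * z‖ := by simpa using norm_sub_norm_le (1 : ℂ) (conj a * z)
  rw [norm_szegoRatio ha, div_le_iff₀ (by linarith)]
  nlinarith [norm_nonneg a]

lemma re_szegoRatio {a z : ℂ} (h : 1 - conj a * z ≠ 0) :
    (szegoRatio a z).re = (1 - ‖a‖ ^ 2) / 2
      + (1 - ‖a‖ ^ 2) * (1 - ‖a‖ ^ 2 * ‖z‖ ^ 2) / (2 * ‖1 - conj a * z‖ ^ 2) := by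
  have h' : normSq (1 - conj a * z) ≠ 0 := by simpa using h
  rw [szegoRatio, div_re]
  simp only [← normSq_eq_norm_sq]
  field_simp
  simp only [normSq_apply, sub_re, sub_im, mul_re, mul_im, conj_re, conj_im, one_re, one_im]
  ring

lemma re_szegoRatio_sub_ge {a b z : ℂ} (ha : ‖a‖ < 1) (hba : ‖b‖ ≤ ‖a‖) (hz : ‖z‖ = 1) :
    ‖szegoRatio a z‖ ^ 2 / 2 - (1 - ‖blaschkeFactor a b‖ ^ 2)
      ≤ (szegoRatio a z - szegoRatio a b).re := by
  have hb : ‖b‖ < 1 := hba.trans_lt ha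
  have hz0 := one_sub_conj_mul_ne_zero_of_norm_lt_one ha hz.le
  have hb0 := one_sub_conj_mul_ne_zero_of_norm_lt_one ha hb.le
  have hb' : 0 < ‖1 - conj a * b‖ := norm_pos_iff.2 hb0
  rw [sub_re, re_szegoRatio hz0, re_szegoRatio hb0, norm_szegoRatio ha,
    one_sub_norm_blaschkeFactor_sq ha hb, hz]
  have hc : 0 ≤ 1 - ‖a‖ ^ 2 := by nlinarith [norm_nonneg a]
  have hzterm : ((1 - ‖a‖ ^ 2) / ‖1 - conj a * z‖) ^ 2 / 2
      = (1 - ‖a‖ ^ 2) * (1 - ‖a‖ ^ 2 * 1 ^ 2) / (2 * ‖1 - conj a * z‖ ^ 2) := by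
    field_simp
  have hbterm : (1 - ‖a‖ ^ 2) * (1 - ‖a‖ ^ 2 * ‖b‖ ^ 2) / (2 * ‖1 - conj a * b‖ ^ 2)
      ≤ (1 - ‖a‖ ^ 2) * (1 - ‖b‖ ^ 2) / ‖1 - conj a * b‖ ^ 2 := by
    rw [div_le_div_iff₀ (by positivity) (by positivity)]
    have key : 1 - ‖a‖ ^ 2 * ‖b‖ ^ 2 ≤ 2 * (1 - ‖b‖ ^ 2) := by
      nlinarith [norm_nonneg b, mul_le_mul hba hba (norm_nonneg b) (norm_nonneg a)]
    have := mul_le_mul_of_nonneg_left key hc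
    nlinarith [sq_nonneg ‖1 - conj a * b‖]
  linarith

end DiscGeometry

section RealInequalities

open Real

lemma le_two_mul_exp_two_mul_one_sub_exp_neg_half {a : ℝ} (h0 : 0 ≤ a) (h4 : a ≤ 4) :
    a ≤ 2 * exp 2 * (1 - exp (-a / 2)) := by
  have h1 : (a / 2 + 1) * exp (-a / 2) ≤ 1 := by
    calc (a / 2 + 1) * exp (-a / 2) ≤ exp (a / 2) * exp (-a / 2) :=
          mul_le_mul_of_nonneg_right (add_one_le_exp _) (exp_pos _).le
      _ = 1 := by rw [← exp_add]; ring_nf; simp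
  have h2 : a * exp (-2) ≤ a * exp (-a / 2) :=
    mul_le_mul_of_nonneg_left (exp_le_exp.2 (by linarith)) h0
  have h3 : exp 2 * exp (-2) = 1 := by rw [← exp_add]; simp
  nlinarith [exp_pos 2]

lemma exp_sum_one_sub_sq_le {ι : Type*} {s : Finset ι} {p : ι → ℝ} (hp : ∀ k ∈ s, 0 < p k) :
    exp (∑ k ∈ s, (1 - p k ^ 2)) ≤ (∏ k ∈ s, p k)⁻¹ ^ 2 := by
  rw [exp_sum, ← prod_inv_distrib, ← prod_pow]
  refine prod_le_prod (fun k _ => (exp_pos _).le) fun k hk => ?_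
  have h := add_one_le_exp (p k ^ 2 - 1)
  rw [inv_pow, le_inv_comm₀ (exp_pos _) (by have := hp k hk; positivity), ← exp_neg, neg_sub]
  linarith

/-- A Riemann sum for `∫₀^S e^{-s/2} ds = 2 (1 - e^{-S/2})` along the tail sums of `a` in the
order given by `r`; steps of length at most `4` cost the factor `e²`. -/
lemma sum_mul_exp_neg_half_sum_filter_le {ι : Type*} [DecidableEq ι] (r a : ι → ℝ)
    (F : Finset ι) (h0 : ∀ j ∈ F, 0 ≤ a j) (h4 : ∀ j ∈ F, a j ≤ 4) :
    ∑ j ∈ F, a j * exp (-(∑ k ∈ F.erase j with r j ≤ r k, a k) / 2)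
      ≤ 2 * exp 2 * (1 - exp (-(∑ j ∈ F, a j) / 2)) := by
  induction F using Finset.strongInduction with
  | _ F ih =>
  rcases F.eq_empty_or_nonempty with rfl | hne
  · simp
  obtain ⟨i, hiF, hi⟩ := F.exists_min_image r hne
  set G := F.erase i
  have hIH := ih G (erase_ssubset hiF) (fun j hj => h0 j (mem_of_mem_erase hj))
    (fun j hj => h4 j (mem_of_mem_erase hj))
  have hfirst : ∑ k ∈ F.erase i with r i ≤ r k, a k = ∑ k ∈ G, a k := by
    rw [filter_true_of_mem fun k hk => hi k (mem_of_mem_erase hk)]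
  have hrest : ∑ j ∈ G, a j * exp (-(∑ k ∈ F.erase j with r j ≤ r k, a k) / 2)
      ≤ ∑ j ∈ G, a j * exp (-(∑ k ∈ G.erase j with r j ≤ r k, a k) / 2) := by
    refine sum_le_sum fun j hj =>
      mul_le_mul_of_nonneg_left (exp_le_exp.2 ?_) (h0 j (mem_of_mem_erase hj))
    have : ∑ k ∈ G.erase j with r j ≤ r k, a k ≤ ∑ k ∈ F.erase j with r j ≤ r k, a k :=
      sum_le_sum_of_subset_of_nonneg
        (filter_subset_filter _ (erase_subset_erase _ (erase_subset _ _)))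
        fun k hk _ => h0 k (mem_of_mem_erase (mem_filter.1 hk).1)
    linarith
  rw [← add_sum_erase F _ hiF, ← add_sum_erase F a hiF, hfirst]
  have hexp : exp (-(a i + ∑ j ∈ G, a j) / 2)
      = exp (-a i / 2) * exp (-(∑ j ∈ G, a j) / 2) := by
    rw [← exp_add]; ring_nf
  have hcore := le_two_mul_exp_two_mul_one_sub_exp_neg_half (h0 i hiF) (h4 i hiF)
  rw [hexp]
  nlinarith [exp_pos (-(∑ j ∈ G, a j) / 2),
    mul_le_mul_of_nonneg_right hcore (exp_pos (-(∑ j ∈ G, a j) / 2)).le]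

end RealInequalities

section JonesInterpolant

open Real

variable {ι : Type*} [DecidableEq ι] {lam : ι → ℂ} {F : Finset ι} {j : ι}

/-- A variant of P. Jones' explicit interpolating functions. The exponential factor, over the
points at least as close to the circle as `lam j`, is what keeps their sum bounded on the unit
circle. -/
def jonesInterpolant (lam : ι → ℂ) (F : Finset ι) (j : ι) (z : ℂ) : ℂ :=
  (∏ k ∈ F.erase j, blaschkeFactor (lam k) z / blaschkeFactor (lam k) (lam j)) *
    szegoRatio (lam j) z ^ 2 *
    Complex.exp (-∑ k ∈ F.erase j with ‖lam j‖ ≤ ‖lam k‖,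
      (szegoRatio (lam k) z - szegoRatio (lam k) (lam j)))

lemma jonesInterpolant_apply_of_ne {i : ι} (hi : i ∈ F) (hij : i ≠ j) :
    jonesInterpolant lam F j (lam i) = 0 := by
  rw [jonesInterpolant, prod_eq_zero (mem_erase.2 ⟨hij, hi⟩) (by simp [blaschkeFactor])]
  simp

lemma jonesInterpolant_apply_self (hj : ‖lam j‖ < 1)
    (hP : 0 < ∏ k ∈ F.erase j, ‖blaschkeFactor (lam k) (lam j)‖) :
    jonesInterpolant lam F j (lam j) = 1 := by
  have hB (k) (hk : k ∈ F.erase j) : blaschkeFactor (lam k) (lam j) ≠ 0 :=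
    norm_ne_zero_iff.1 (prod_ne_zero_iff.1 hP.ne' k hk)
  have hs : szegoRatio (lam j) (lam j) = 1 :=
    div_self (one_sub_conj_mul_ne_zero_of_norm_lt_one hj hj.le)
  simp [jonesInterpolant, prod_eq_one fun k hk => div_self (hB k hk), hs]

lemma differentiableAt_jonesInterpolant {z : ℂ} (hj : j ∈ F)
    (hz : ∀ k ∈ F, 1 - conj (lam k) * z ≠ 0) :
    DifferentiableAt ℂ (jonesInterpolant lam F j) z := by
  have hB (k) (hk : k ∈ F) : DifferentiableAt ℂ (blaschkeFactor (lam k)) z :=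
    (differentiableAt_id.sub_const _).div (by fun_prop) (hz k hk)
  have hS (k) (hk : k ∈ F) : DifferentiableAt ℂ (szegoRatio (lam k)) z :=
    (differentiableAt_const _).div (by fun_prop) (hz k hk)
  refine ((DifferentiableAt.fun_finsetProd fun k hk => ?_).mul ((hS j hj).pow 2)).mul
    (DifferentiableAt.cexp (DifferentiableAt.fun_neg (DifferentiableAt.fun_sum fun k hk => ?_)))
  · exact (hB k (mem_of_mem_erase hk)).div_const _
  · exact (hS k (mem_of_mem_erase (mem_filter.1 hk).1)).sub_const _

lemma norm_jonesInterpolant_le (hlam : ∀ k, ‖lam k‖ < 1)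
    (hP : 0 < ∏ k ∈ F.erase j, ‖blaschkeFactor (lam k) (lam j)‖) {z : ℂ} (hz : ‖z‖ = 1) :
    ‖jonesInterpolant lam F j z‖
      ≤ (∏ k ∈ F.erase j, ‖blaschkeFactor (lam k) (lam j)‖)⁻¹ ^ 3 *
        (‖szegoRatio (lam j) z‖ ^ 2 *
          exp (-(∑ k ∈ F.erase j with ‖lam j‖ ≤ ‖lam k‖, ‖szegoRatio (lam k) z‖ ^ 2) / 2)) := by
  set P := ∏ k ∈ F.erase j, ‖blaschkeFactor (lam k) (lam j)‖
  set K := (F.erase j).filter fun k => ‖lam j‖ ≤ ‖lam k‖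
  have hB (k) (hk : k ∈ F.erase j) : 0 < ‖blaschkeFactor (lam k) (lam j)‖ :=
    (norm_nonneg _).lt_of_ne' (prod_ne_zero_iff.1 hP.ne' k hk)
  have hBl : ‖∏ k ∈ F.erase j, blaschkeFactor (lam k) z / blaschkeFactor (lam k) (lam j)‖
      = P⁻¹ := by
    simp only [norm_prod, norm_div, norm_blaschkeFactor_of_norm_eq_one (hlam _) hz, one_div,
      prod_inv_distrib, P]
  have hdefect : ∑ k ∈ K, (1 - ‖blaschkeFactor (lam k) (lam j)‖ ^ 2)
      ≤ ∑ k ∈ F.erase j, (1 - ‖blaschkeFactor (lam k) (lam j)‖ ^ 2) :=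
    sum_le_sum_of_subset_of_nonneg (filter_subset _ _) fun k _ _ => by
      rw [one_sub_norm_blaschkeFactor_sq (hlam k) (hlam j)]
      have : 0 ≤ 1 - ‖lam k‖ ^ 2 := by nlinarith [norm_nonneg (lam k), hlam k]
      have : 0 ≤ 1 - ‖lam j‖ ^ 2 := by nlinarith [norm_nonneg (lam j), hlam j]
      positivity
  have hre : (∑ k ∈ K, ‖szegoRatio (lam k) z‖ ^ 2) / 2
        - ∑ k ∈ K, (1 - ‖blaschkeFactor (lam k) (lam j)‖ ^ 2)
      ≤ (∑ k ∈ K, (szegoRatio (lam k) z - szegoRatio (lam k) (lam j))).re := by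
    rw [sum_div, ← sum_sub_distrib, Complex.re_sum]
    exact sum_le_sum fun k hk => re_szegoRatio_sub_ge (hlam k) (mem_filter.1 hk).2 hz
  have hexp : ‖Complex.exp (-∑ k ∈ K, (szegoRatio (lam k) z - szegoRatio (lam k) (lam j)))‖
      ≤ exp (-(∑ k ∈ K, ‖szegoRatio (lam k) z‖ ^ 2) / 2) * P⁻¹ ^ 2 := by
    calc _ ≤ exp (-(∑ k ∈ K, ‖szegoRatio (lam k) z‖ ^ 2) / 2
              + ∑ k ∈ F.erase j, (1 - ‖blaschkeFactor (lam k) (lam j)‖ ^ 2)) := by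
          rw [Complex.norm_exp, Complex.neg_re]
          exact exp_le_exp.2 (by linarith)
      _ ≤ _ := by
          rw [exp_add]
          exact mul_le_mul_of_nonneg_left (exp_sum_one_sub_sq_le hB) (exp_pos _).le
  rw [jonesInterpolant, norm_mul, norm_mul, hBl, norm_pow]
  calc P⁻¹ * ‖szegoRatio (lam j) z‖ ^ 2 * _
      ≤ P⁻¹ * ‖szegoRatio (lam j) z‖ ^ 2 *
          (exp (-(∑ k ∈ K, ‖szegoRatio (lam k) z‖ ^ 2) / 2) * P⁻¹ ^ 2) := by gcongr
    _ = _ := by ring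

lemma sum_norm_jonesInterpolant_le (hlam : ∀ k, ‖lam k‖ < 1) {δ : ℝ} (hδ : 0 < δ)
    (hCar : ∀ j ∈ F, δ ≤ ∏ k ∈ F.erase j, ‖blaschkeFactor (lam k) (lam j)‖)
    {z : ℂ} (hz : ‖z‖ = 1) :
    ∑ j ∈ F, ‖jonesInterpolant lam F j z‖ ≤ 2 * exp 2 * δ⁻¹ ^ 3 := by
  set t : ι → ℝ := fun k => ‖szegoRatio (lam k) z‖ ^ 2
  have hterm (j) (hj : j ∈ F) : ‖jonesInterpolant lam F j z‖
      ≤ δ⁻¹ ^ 3 * (t j * exp (-(∑ k ∈ F.erase j with ‖lam j‖ ≤ ‖lam k‖, t k) / 2)) := by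
    refine (norm_jonesInterpolant_le hlam (hδ.trans_le (hCar j hj)) hz).trans
      (mul_le_mul_of_nonneg_right ?_ (by positivity))
    gcongr
    exact hCar j hj
  have ht (k) : t k ≤ 4 := by
    nlinarith [norm_szegoRatio_le_two (hlam k) hz.le, norm_nonneg (szegoRatio (lam k) z)]
  calc ∑ j ∈ F, ‖jonesInterpolant lam F j z‖
      ≤ δ⁻¹ ^ 3 * ∑ j ∈ F, t j * exp (-(∑ k ∈ F.erase j with ‖lam j‖ ≤ ‖lam k‖, t k) / 2) := by
        rw [mul_sum]; exact sum_le_sum hterm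
    _ ≤ δ⁻¹ ^ 3 * (2 * exp 2 * (1 - exp (-(∑ j ∈ F, t j) / 2))) := by
        gcongr
        exact sum_mul_exp_neg_half_sum_filter_le (‖lam ·‖) t F (fun j _ => by positivity)
          fun j _ => ht j
    _ ≤ δ⁻¹ ^ 3 * (2 * exp 2) := by
        gcongr δ⁻¹ ^ 3 * ?_
        nlinarith [exp_pos (-(∑ j ∈ F, t j) / 2), exp_pos 2]
    _ = 2 * exp 2 * δ⁻¹ ^ 3 := mul_comm _ _

theorem exists_bounded_interpolant (hlam : ∀ k, ‖lam k‖ < 1) {δ : ℝ} (hδ : 0 < δ)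
    (hCar : ∀ j ∈ F, δ ≤ ∏ k ∈ F.erase j, ‖blaschkeFactor (lam k) (lam j)‖)
    (w : ι → ℂ) (hw : ∀ k ∈ F, ‖w k‖ ≤ 1) :
    ∃ g : ℂ → ℂ, ∃ R > 1, DifferentiableOn ℂ g (closedBall 0 R) ∧
      (∀ z ∈ closedBall 0 1, ‖g z‖ ≤ 2 * exp 2 * δ⁻¹ ^ 3) ∧ ∀ k ∈ F, g (lam k) = w k := by
  obtain ⟨R, hR, hR1⟩ : ∃ R, (∀ k ∈ F, ‖lam k‖ * R < 1) ∧ 1 < R := by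
    have : ∀ᶠ R in 𝓝 (1 : ℝ), ∀ k ∈ F, ‖lam k‖ * R < 1 :=
      (eventually_all_finset F).2 fun k _ => (continuous_const_mul _).continuousAt.eventually_lt
        continuousAt_const (by simpa using hlam k)
    exact ((this.filter_mono nhdsWithin_le_nhds).and (self_mem_nhdsWithin (s := Set.Ioi 1))).exists
  set g : ℂ → ℂ := fun z => ∑ j ∈ F, w j * jonesInterpolant lam F j z
  have hdiff : DifferentiableOn ℂ g (closedBall 0 R) := fun z hz =>
    (DifferentiableAt.fun_sum fun j hj => (differentiableAt_jonesInterpolant hj fun k hk =>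
      one_sub_conj_mul_ne_zero ((mul_le_mul_of_nonneg_left (mem_closedBall_zero_iff.1 hz)
        (norm_nonneg _)).trans_lt (hR k hk))).const_mul _).differentiableWithinAt
  have hsphere (z) (hz : z ∈ sphere (0 : ℂ) 1) : ‖g z‖ ≤ 2 * exp 2 * δ⁻¹ ^ 3 := by
    refine (norm_sum_le _ _).trans ((sum_le_sum fun j hj => ?_).trans
      (sum_norm_jonesInterpolant_le hlam hδ hCar (mem_sphere_zero_iff_norm.1 hz)))
    rw [norm_mul]
    exact mul_le_of_le_one_left (norm_nonneg _) (hw j hj)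
  refine ⟨g, R, hR1, hdiff, fun z hz => ?_, fun i hi => ?_⟩
  · have hcl : closure (ball (0 : ℂ) 1) ⊆ closedBall 0 R := by
      rw [closure_ball 0 one_ne_zero]
      exact closedBall_subset_closedBall hR1.le
    exact Complex.norm_le_of_forall_mem_frontier_norm_le isBounded_ball
      (hdiff.mono hcl).diffContOnCl (by rwa [frontier_ball 0 one_ne_zero])
      (by rwa [closure_ball 0 one_ne_zero])
  · change ∑ j ∈ F, w j * jonesInterpolant lam F j (lam i) = w i
    rw [sum_eq_single i (fun j _ hji => by rw [jonesInterpolant_apply_of_ne hi hji.symm, mul_zero])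
      (fun h => absurd hi h), jonesInterpolant_apply_self (hlam i) (hδ.trans_le (hCar i hi)),
      mul_one]

end JonesInterpolant

section PolynomialCalculus

open Polynomial

variable {E : Type*} [NormedAddCommGroup E] [NormedSpace ℂ E]

lemma exists_polynomial_tendstoUniformlyOn {g : ℂ → ℂ} {R : ℝ} (hR : 1 < R)
    (hg : DifferentiableOn ℂ g (closedBall 0 R)) :
    ∃ P : ℕ → ℂ[X], TendstoUniformlyOn (fun n z => (P n).eval z) g atTop (closedBall 0 1) := by
  lift R to NNReal using by linarith
  set p := cauchyPowerSeries g 0 R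
  have hps := hg.hasFPowerSeriesOnBall (by exact_mod_cast (zero_lt_one.trans hR))
  obtain ⟨r, hr1, hrR⟩ := exists_between (show (1 : NNReal) < R by exact_mod_cast hR)
  have hconv := hps.tendstoUniformlyOn (r' := r) (by exact_mod_cast hrR)
  simp only [zero_add] at hconv
  refine ⟨fun n => ∑ i ∈ range n, C (p.coeff i) * X ^ i, ?_⟩
  have heval (n : ℕ) (z : ℂ) :
      (∑ i ∈ range n, C (p.coeff i) * X ^ i).eval z = p.partialSum n z := by
    rw [eval_finsetSum, FormalMultilinearSeries.partialSum]
    refine sum_congr rfl fun i _ => ?_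
    rw [FormalMultilinearSeries.apply_eq_pow_smul_coeff, smul_eq_mul, eval_mul, eval_C,
      eval_pow, eval_X, mul_comm]
  simp only [heval]
  exact hconv.mono (closedBall_subset_ball (by exact_mod_cast hr1))

lemma ContinuousLinearMap.aeval_apply_of_apply_eq_smul {T : E →L[ℂ] E} {μ : ℂ} {v : E} (hv : T v = μ • v)
    (p : ℂ[X]) : aeval T p v = p.eval μ • v := by
  induction p using Polynomial.induction_on with
  | C a => simp [Algebra.algebraMap_eq_smul_one]
  | add p q hp hq => simp [hp, hq, add_smul]
  | monomial n a h =>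
    have hstep : aeval T (C a * X ^ (n + 1)) v = aeval T (C a * X ^ n) (T v) := by
      rw [pow_succ, ← mul_assoc, map_mul, aeval_X]; rfl
    rw [hstep, hv, map_smul, h, smul_smul]
    simp only [eval_mul, eval_C, eval_pow, eval_X]
    ring_nf

def PolynomiallyBoundedWith (T : E →L[ℂ] E) (M : ℝ) : Prop :=
  ∀ p : ℂ[X], ‖aeval T p‖ ≤ M * sSup ((fun z : ℂ => ‖p.eval z‖) '' {z : ℂ | ‖z‖ ≤ 1})

variable {T : E →L[ℂ] E} {M : ℝ}

lemma PolynomiallyBoundedWith.norm_aeval_le (hM : PolynomiallyBoundedWith T M) (hM0 : 0 ≤ M)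
    {p : ℂ[X]} {c : ℝ} (hc : ∀ z ∈ closedBall (0 : ℂ) 1, ‖p.eval z‖ ≤ c) :
    ‖aeval T p‖ ≤ M * c := by
  refine (hM p).trans (mul_le_mul_of_nonneg_left (csSup_le ⟨_, 0, by simp, rfl⟩ ?_) hM0)
  rintro _ ⟨z, hz, rfl⟩
  exact hc z (mem_closedBall_zero_iff.2 hz)

theorem PolynomiallyBoundedWith.exists_opNorm_le_of_tendstoUniformlyOn [CompleteSpace E]
    (hM : PolynomiallyBoundedWith T M) (hM0 : 0 ≤ M) {g : ℂ → ℂ} {P : ℕ → ℂ[X]}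
    (hP : TendstoUniformlyOn (fun n z => (P n).eval z) g atTop (closedBall 0 1))
    {C : ℝ} (hg : ∀ z ∈ closedBall (0 : ℂ) 1, ‖g z‖ ≤ C) :
    ∃ U : E →L[ℂ] E, ‖U‖ ≤ M * C ∧
      ∀ (μ : ℂ) (v : E), ‖μ‖ ≤ 1 → T v = μ • v → U v = g μ • v := by
  have hM1 : (0 : ℝ) < M + 1 := by linarith
  have hMε (ε : ℝ) (hε : 0 < ε) : M * (ε / (M + 1)) < ε := by
    rw [mul_div_assoc', div_lt_iff₀ hM1]; nlinarith
  have hcauchy : CauchySeq fun n => aeval T (P n) := by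
    refine Metric.cauchySeq_iff.2 fun ε hε => ?_
    obtain ⟨N, hN⟩ := Metric.uniformCauchySeqOn_iff.1 hP.uniformCauchySeqOn _ (div_pos hε hM1)
    refine ⟨N, fun m hm n hn => ?_⟩
    rw [dist_eq_norm, ← map_sub]
    refine (hM.norm_aeval_le hM0 fun z hz => ?_).trans_lt (hMε ε hε)
    rw [eval_sub, ← dist_eq_norm]
    exact (hN m hm n hn z hz).le
  obtain ⟨U, hU⟩ := cauchySeq_tendsto_of_complete hcauchy
  refine ⟨U, le_of_forall_pos_le_add fun ε hε => ?_, fun μ v hμ hv => ?_⟩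
  · refine le_of_tendsto hU.norm ?_
    filter_upwards [Metric.tendstoUniformlyOn_iff.1 hP _ (div_pos hε hM1)] with n hn
    refine (hM.norm_aeval_le (c := C + ε / (M + 1)) hM0 fun z hz => ?_).trans
      (by nlinarith [hMε ε hε])
    have := hn z hz
    rw [dist_eq_norm'] at this
    linarith [hg z hz, norm_le_insert' ((P n).eval z) (g z)]
  · have hlim : Tendsto (fun n => aeval T (P n) v) atTop (𝓝 (g μ • v)) := by
      simp only [ContinuousLinearMap.aeval_apply_of_apply_eq_smul hv]
      exact (hP.tendsto_at (mem_closedBall_zero_iff.2 hμ)).smul_const v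
    exact tendsto_nhds_unique (((ContinuousLinearMap.apply ℂ E v).continuous.tendsto U).comp hU)
      hlim

theorem PolynomiallyBoundedWith.exists_interpolating_operator [CompleteSpace E]
    (hM : PolynomiallyBoundedWith T M) (hM0 : 0 ≤ M) {ι : Type*} [DecidableEq ι]
    {lam : ι → ℂ} (hlam : ∀ k, ‖lam k‖ < 1) {δ : ℝ} (hδ : 0 < δ) {F : Finset ι}
    (hCar : ∀ j ∈ F, δ ≤ ∏ k ∈ F.erase j, ‖blaschkeFactor (lam k) (lam j)‖)
    (w : ι → ℂ) (hw : ∀ k ∈ F, ‖w k‖ ≤ 1) :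
    ∃ U : E →L[ℂ] E, ‖U‖ ≤ M * (2 * Real.exp 2 * δ⁻¹ ^ 3) ∧
      ∀ k ∈ F, ∀ v : E, T v = lam k • v → U v = w k • v := by
  obtain ⟨g, R, hR, hdiff, hbound, hval⟩ := exists_bounded_interpolant hlam hδ hCar w hw
  obtain ⟨P, hP⟩ := exists_polynomial_tendstoUniformlyOn hR hdiff
  obtain ⟨U, hU, hUv⟩ := hM.exists_opNorm_le_of_tendstoUniformlyOn hM0 hP hbound
  exact ⟨U, hU, fun k hk v hv => by rw [hUv _ v (hlam k).le hv, hval k hk]⟩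

end PolynomialCalculus

section SignAveraging

variable {ι : Type*} [DecidableEq ι]

lemma sum_powerset_norm_sum_ite_neg_sq (𝕜 : Type*) {E : Type*} [RCLike 𝕜]
    [NormedAddCommGroup E] [InnerProductSpace 𝕜 E] (F : Finset ι) (u : ι → E) :
    ∑ S ∈ F.powerset, ‖∑ k ∈ F, (if k ∈ S then -u k else u k)‖ ^ 2
      = 2 ^ #F * ∑ k ∈ F, ‖u k‖ ^ 2 := by
  induction F using Finset.induction_on with
  | empty => simp
  | insert j F hj ih =>
    rw [sum_powerset_insert hj, ← sum_add_distrib]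
    have hpair (S) (hS : S ∈ F.powerset) :
        ‖∑ k ∈ insert j F, (if k ∈ S then -u k else u k)‖ ^ 2
          + ‖∑ k ∈ insert j F, (if k ∈ insert j S then -u k else u k)‖ ^ 2
        = 2 * (‖∑ k ∈ F, (if k ∈ S then -u k else u k)‖ ^ 2 + ‖u j‖ ^ 2) := by
      have hjS : j ∉ S := fun h => hj (mem_powerset.1 hS h)
      have hrest : ∑ k ∈ F, (if k ∈ insert j S then -u k else u k)
          = ∑ k ∈ F, (if k ∈ S then -u k else u k) :=
        sum_congr rfl fun k hk => by simp only [mem_insert, ne_of_mem_of_not_mem hk hj, false_or]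
      rw [sum_insert hj, sum_insert hj, hrest, if_neg hjS, if_pos (mem_insert_self j S),
        add_comm (u j), neg_add_eq_sub]
      nlinarith [parallelogram_law_with_norm 𝕜 (∑ k ∈ F, (if k ∈ S then -u k else u k)) (u j)]
    rw [sum_congr rfl hpair, ← mul_sum, sum_add_distrib, ih, sum_const, card_powerset,
      card_insert_of_notMem hj, sum_insert hj, nsmul_eq_mul]
    push_cast
    ring

variable {𝕜 E : Type*} [RCLike 𝕜] [NormedAddCommGroup E] [InnerProductSpace 𝕜 E]

lemma sum_norm_sq_le_and_norm_sum_sq_le {u : ι → E} {F : Finset ι} {K : ℝ}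
    (hU : ∀ S ⊆ F, ∃ U : E →L[𝕜] E, ‖U‖ ≤ K ∧
      ∀ k ∈ F, U (u k) = if k ∈ S then -u k else u k) :
    ∑ k ∈ F, ‖u k‖ ^ 2 ≤ K ^ 2 * ‖∑ k ∈ F, u k‖ ^ 2 ∧
      ‖∑ k ∈ F, u k‖ ^ 2 ≤ K ^ 2 * ∑ k ∈ F, ‖u k‖ ^ 2 := by
  set v : Finset ι → E := fun S => ∑ k ∈ F, (if k ∈ S then -u k else u k)
  have hsigns (S) (hS : S ∈ F.powerset) : ‖v S‖ ^ 2 ≤ K ^ 2 * ‖∑ k ∈ F, u k‖ ^ 2 ∧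
      ‖∑ k ∈ F, u k‖ ^ 2 ≤ K ^ 2 * ‖v S‖ ^ 2 := by
    obtain ⟨U, hUK, hUu⟩ := hU S (mem_powerset.1 hS)
    have h1 : U (∑ k ∈ F, u k) = v S := by
      rw [map_sum]; exact sum_congr rfl hUu
    have h2 : U (v S) = ∑ k ∈ F, u k := by
      rw [map_sum]
      refine sum_congr rfl fun k hk => ?_
      split_ifs with h <;> simp [hUu k hk, h]
    rw [← mul_pow, ← mul_pow]
    constructor
    · rw [← h1]; exact pow_le_pow_left₀ (norm_nonneg _) (U.le_of_opNorm_le hUK _) 2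
    · rw [← h2]; exact pow_le_pow_left₀ (norm_nonneg _) (U.le_of_opNorm_le hUK _) 2
  have havg := sum_powerset_norm_sum_ite_neg_sq 𝕜 F u
  have h2pos : (0 : ℝ) < 2 ^ #F := by positivity
  constructor
  · have := sum_le_sum fun S hS => (hsigns S hS).1
    rw [havg, sum_const, card_powerset, nsmul_eq_mul] at this
    push_cast at this
    exact le_of_mul_le_mul_left (by linarith) h2pos
  · have := sum_le_sum fun S hS => (hsigns S hS).2
    rw [← mul_sum, havg, sum_const, card_powerset, nsmul_eq_mul] at this
    push_cast at this
    exact le_of_mul_le_mul_left (by linarith) h2pos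

end SignAveraging

section RieszSequence

variable {ι 𝕜 E : Type*} [RCLike 𝕜] [NormedAddCommGroup E] [InnerProductSpace 𝕜 E]

lemma lp.hasSum_norm_sq (a : lp (fun _ : ι => 𝕜) 2) :
    HasSum (fun k => ‖a k‖ ^ 2) (‖a‖ ^ 2) := by
  simpa using lp.hasSum_norm (p := 2) (by norm_num) a

theorem exists_continuousLinearEquiv_lp_of_riesz_bounds [CompleteSpace E] {y : ι → E} {K : ℝ}
    (hK : 0 ≤ K)
    (hlow : ∀ (F : Finset ι) (c : ι → 𝕜), ∑ k ∈ F, ‖c k‖ ^ 2 ≤ K ^ 2 * ‖∑ k ∈ F, c k • y k‖ ^ 2)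
    (hup : ∀ (F : Finset ι) (c : ι → 𝕜), ‖∑ k ∈ F, c k • y k‖ ^ 2 ≤ K ^ 2 * ∑ k ∈ F, ‖c k‖ ^ 2)
    (hspan : (Submodule.span 𝕜 (Set.range y)).topologicalClosure = ⊤) :
    ∃ e : lp (fun _ : ι => 𝕜) 2 ≃L[𝕜] E, ∀ a, HasSum (fun k => a k • y k) (e a) := by
  classical
  have hsummable (a : lp (fun _ : ι => 𝕜) 2) : Summable fun k => a k • y k := by
    refine summable_iff_vanishing_norm.2 fun ε hε => ?_
    obtain ⟨s, hs⟩ := summable_iff_vanishing_norm.1 (lp.hasSum_norm_sq a).summable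
      (ε ^ 2 / (K ^ 2 + 1)) (by positivity)
    refine ⟨s, fun t hts => (pow_lt_pow_iff_left₀ (norm_nonneg _) hε.le two_ne_zero).1 ?_⟩
    have ht := hs t hts
    rw [Real.norm_of_nonneg (sum_nonneg fun _ _ => by positivity),
      lt_div_iff₀ (by positivity)] at ht
    nlinarith [hup t a, sum_nonneg fun k (_ : k ∈ t) => sq_nonneg ‖a k‖]
  let Φ : lp (fun _ : ι => 𝕜) 2 →ₗ[𝕜] E :=
    { toFun := fun a => ∑' k, a k • y k
      map_add' := fun a b => by
        simp only [lp.coeFn_add, Pi.add_apply, add_smul]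
        exact ((hsummable a).hasSum.add (hsummable b).hasSum).tsum_eq
      map_smul' := fun c a => by
        simp only [lp.coeFn_smul, Pi.smul_apply, smul_eq_mul, mul_smul, RingHom.id_apply]
        exact ((hsummable a).hasSum.const_smul c).tsum_eq }
  have hΦ (a : lp (fun _ : ι => 𝕜) 2) : HasSum (fun k => a k • y k) (Φ a) :=
    (hsummable a).hasSum
  have hupper (a : lp (fun _ : ι => 𝕜) 2) : ‖Φ a‖ ≤ K * ‖a‖ := by
    refine (pow_le_pow_iff_left₀ (norm_nonneg _) (by positivity) two_ne_zero).1 ?_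
    rw [mul_pow]
    exact le_of_tendsto_of_tendsto' ((hΦ a).norm.pow 2) ((lp.hasSum_norm_sq a).const_mul _)
      (hup · a)
  have hlower (a : lp (fun _ : ι => 𝕜) 2) : ‖a‖ ≤ K * ‖Φ a‖ := by
    refine (pow_le_pow_iff_left₀ (norm_nonneg _) (by positivity) two_ne_zero).1 ?_
    rw [mul_pow]
    exact le_of_tendsto_of_tendsto' (lp.hasSum_norm_sq a) (((hΦ a).norm.pow 2).const_mul _)
      (hlow · a)
  let Ψ := Φ.mkContinuous K hupper
  have hanti : AntilipschitzWith K.toNNReal Ψ :=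
    AddMonoidHomClass.antilipschitz_of_bound Ψ fun a => by
      rw [Real.coe_toNNReal _ hK]; exact hlower a
  have hrange : LinearMap.range (Ψ : lp (fun _ : ι => 𝕜) 2 →ₗ[𝕜] E) = ⊤ := by
    have hy : Submodule.span 𝕜 (Set.range y) ≤ LinearMap.range Ψ.toLinearMap := by
      refine Submodule.span_le.2 ?_
      rintro _ ⟨k, rfl⟩
      let b : lp (fun _ : ι => 𝕜) 2 := lp.single 2 k 1
      have hb : HasSum (fun n => b n • y n) (y k) := by
        simpa [b] using hasSum_single (f := fun n => b n • y n) k fun n hn => by simp [b, hn]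
      exact ⟨b, (hΦ b).unique hb⟩
    rw [eq_top_iff, ← hspan]
    exact Submodule.topologicalClosure_minimal _ hy (hanti.isClosed_range Ψ.uniformContinuous)
  exact ⟨.ofBijective Ψ (LinearMap.ker_eq_bot_of_injective hanti.injective) hrange, hΦ⟩

end RieszSequence

section Carleson

variable {E : Type*} [NormedAddCommGroup E] [InnerProductSpace ℂ E] [CompleteSpace E]

lemma CarlesonCondition.exists_le_prod_norm_blaschkeFactor {lam : ℕ → ℂ}
    (h : CarlesonCondition lam) : ∃ δ > 0, ∀ (F : Finset ℕ), ∀ j ∈ F,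
      δ ≤ ∏ k ∈ F.erase j, ‖blaschkeFactor (lam k) (lam j)‖ := by
  obtain ⟨δ, hδ, hCar⟩ := h
  exact ⟨δ, hδ, fun F j _ => by
    simpa only [norm_blaschkeFactor] using hCar j _ (F.notMem_erase j)⟩

theorem PolynomiallyBoundedWith.riesz_bounds_of_eigenvectors {T : E →L[ℂ] E} {M : ℝ}
    (hM : PolynomiallyBoundedWith T M) (hM0 : 0 ≤ M) {ι : Type*} [DecidableEq ι]
    {lam : ι → ℂ} (hlam : ∀ k, ‖lam k‖ < 1) {δ : ℝ} (hδ : 0 < δ)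
    (hCar : ∀ (F : Finset ι), ∀ j ∈ F, δ ≤ ∏ k ∈ F.erase j, ‖blaschkeFactor (lam k) (lam j)‖)
    {y : ι → E} (hy : ∀ k, ‖y k‖ = 1) (hTy : ∀ k, T (y k) = lam k • y k)
    (F : Finset ι) (c : ι → ℂ) :
    ∑ k ∈ F, ‖c k‖ ^ 2 ≤ (M * (2 * Real.exp 2 * δ⁻¹ ^ 3)) ^ 2 * ‖∑ k ∈ F, c k • y k‖ ^ 2 ∧
      ‖∑ k ∈ F, c k • y k‖ ^ 2 ≤ (M * (2 * Real.exp 2 * δ⁻¹ ^ 3)) ^ 2 * ∑ k ∈ F, ‖c k‖ ^ 2 := by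
  simpa only [norm_smul, hy, mul_one] using
    sum_norm_sq_le_and_norm_sum_sq_le (u := fun k => c k • y k) fun S _ => by
      obtain ⟨U, hU, hUv⟩ := hM.exists_interpolating_operator hM0 hlam hδ (hCar F)
        (fun k => if k ∈ S then -1 else 1) fun k _ => by split_ifs <;> simp
      refine ⟨U, hU, fun k hk => ?_⟩
      rw [hUv k hk _ (by rw [map_smul, hTy, smul_comm])]
      split_ifs <;> simp

end Carleson

theorem similar_to_diagonal_of_carleson_general
    (lam : ℕ → ℂ) (hdisc : ∀ n : ℕ, ‖lam n‖ < 1)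
    (hCar : CarlesonCondition lam)
    {H : Type} [NormedAddCommGroup H] [InnerProductSpace ℂ H] [CompleteSpace H]
    (x : ℕ → H) (hx : ∀ n : ℕ, x n ≠ 0)
    (hspan : (Submodule.span ℂ (Set.range x)).topologicalClosure = ⊤)
    (T : H →L[ℂ] H) (hT : ∀ n : ℕ, T (x n) = lam n • x n)
    (D : lp (fun _ : ℕ => ℂ) 2 →L[ℂ] lp (fun _ : ℕ => ℂ) 2)
    (hD : ∀ (a : lp (fun _ : ℕ => ℂ) 2) (n : ℕ), D a n = lam n * a n)
    (hTpb : PolynomiallyBounded T) :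
    ∃ X : H ≃L[ℂ] lp (fun _ : ℕ => ℂ) 2, ∀ v : H, X (T v) = D (X v) := by
  obtain ⟨δ, hδ, hCar⟩ := hCar.exists_le_prod_norm_blaschkeFactor
  obtain ⟨M, hM0, hM⟩ := hTpb
  set y : ℕ → H := fun n => (‖x n‖⁻¹ : ℂ) • x n
  have hy (n : ℕ) : ‖y n‖ = 1 := norm_smul_inv_norm (hx n)
  have hTy (n : ℕ) : T (y n) = lam n • y n := by
    simp only [y]; rw [map_smul, hT, smul_comm]
  have hyspan : (Submodule.span ℂ (Set.range y)).topologicalClosure = ⊤ := by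
    refine top_unique (hspan ▸ Submodule.topologicalClosure_mono (Submodule.span_le.2 ?_))
    rintro _ ⟨n, rfl⟩
    have hxy : x n = (‖x n‖ : ℂ) • y n := by simp [y, smul_smul, norm_ne_zero_iff.2 (hx n)]
    rw [hxy]
    exact Submodule.smul_mem _ _ (Submodule.subset_span ⟨n, rfl⟩)
  clear_value y
  have hRiesz := PolynomiallyBoundedWith.riesz_bounds_of_eigenvectors hM hM0.le hdisc hδ hCar
    hy hTy
  obtain ⟨e, he⟩ := exists_continuousLinearEquiv_lp_of_riesz_bounds (by positivity)
    (fun F c => (hRiesz F c).1) (fun F c => (hRiesz F c).2) hyspan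
  refine ⟨e.symm, fun v => e.injective ?_⟩
  obtain ⟨a, rfl⟩ := e.surjective v
  rw [e.apply_symm_apply, e.symm_apply_apply]
  refine ((he a).map T T.continuous).unique ?_
  convert he (D a) using 2 with k
  simp [hD, hTy, smul_smul, mul_comm]

/-- Proposition 4.2: a polynomially bounded operator with a spanning family of eigenvectors
whose (pairwise distinct) eigenvalues satisfy the Carleson condition is similar to the
diagonal operator with the same eigenvalues. -/
theorem similar_to_diagonal_of_carleson
    (lam : ℕ → ℂ) (hinj : Function.Injective lam) (hdisc : ∀ n : ℕ, ‖lam n‖ < 1)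
    (hCar : CarlesonCondition lam)
    {H : Type} [NormedAddCommGroup H] [InnerProductSpace ℂ H] [CompleteSpace H]
    (x : ℕ → H) (hx : ∀ n : ℕ, x n ≠ 0)
    (hspan : (Submodule.span ℂ (Set.range x)).topologicalClosure = ⊤)
    (T : H →L[ℂ] H) (hT : ∀ n : ℕ, T (x n) = lam n • x n)
    (D : lp (fun _ : ℕ => ℂ) 2 →L[ℂ] lp (fun _ : ℕ => ℂ) 2)
    (hD : ∀ (a : lp (fun _ : ℕ => ℂ) 2) (n : ℕ), D a n = lam n * a n)
    (hTpb : PolynomiallyBounded T) :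
    ∃ X : H ≃L[ℂ] lp (fun _ : ℕ => ℂ) 2, ∀ v : H, X (T v) = D (X v) :=
  similar_to_diagonal_of_carleson_general lam hdisc hCar x hx hspan T hT D hD hTpb
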